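/- (Induction step of the main theorem) Suppose E[d_1(\hat{F}_{j-1,m}, F_{j-1})] \leq \delta and E[d_1(G_m, F_j)] \leq \epsilon where G_m is the empirical distribution of m i.i.d. copies of R^{(j)}. Then the bootstrap pool at level j satisfies E[d_1(\hat{F}_{j,m}, F_j)] \leq \rho_1 \delta + \epsilon, where \rho_1 = E[\sum_{r=1}^N |C_r|]. -/

import Mathlib

open MeasureTheory ProbabilityTheory

noncomputable def cdfFun (μ : Measure ℝ) (x : ℝ) : ℝ := (μ (Set.Iic x)).toReal

noncomputable def pseudoInv (F : ℝ → ℝ) (t : ℝ) : ℝ := sInf {x | t ≤ F x}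

noncomputable def empCDF {Ω : Type*} (m : ℕ) (R : ℕ → Ω → ℝ) (ω : Ω) (x : ℝ) : ℝ :=
  (1 / m : ℝ) * ∑ i ∈ Finset.range m, (if R i ω ≤ x then (1 : ℝ) else 0)

/-- Index type for the branching vectors `B i` and uniforms `U i r` of one level. -/
def lvlIdx : Type := ℕ ⊕ (ℕ × ℕ)

def lvlType : lvlIdx → Type := Sum.elim (fun _ => ℝ × ℕ × (ℕ → ℝ)) (fun _ => ℝ)

noncomputable instance (s : lvlIdx) : MeasurableSpace (lvlType s) := by
  cases s with
  | inl a => exact (inferInstance : MeasurableSpace (ℝ × ℕ × (ℕ → ℝ)))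
  | inr a => exact (inferInstance : MeasurableSpace ℝ)

def lvlFam {Ω : Type*} (B : ℕ → Ω → ℝ × ℕ × (ℕ → ℝ)) (U : ℕ → ℕ → Ω → ℝ)
    (s : lvlIdx) : Ω → lvlType s :=
  Sum.rec (motive := fun s => Ω → lvlType s)
    (fun i ω => B i ω) (fun ir ω => U ir.1 ir.2 ω) s

open Filter
open scoped ENNReal

/-!
An empirical distribution function is an average of step functions and
`∫ |1{a ≤ x} - 1{b ≤ x}| dx = |a - b|`, so the common branching vectors and uniforms give
`d₁(F̂_{j,m}, G_m) ≤ (1/m) ∑ᵢ |R̂ᵢ - Rᵢ|`. Here `R̂ᵢ - Rᵢ = ∑_r C_r (F̂⁻¹(U_r) - F⁻¹(U_r))`;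
the uniforms are independent of the branching vector and of `F̂`, so
`E|R̂ᵢ - Rᵢ| ≤ E[∑_r |C_r|] · E ∫₀¹ |F̂⁻¹ - F⁻¹|`, and the quantile coupling bounds
`∫₀¹ |F̂⁻¹ - F⁻¹|` by `∫ |F̂ - F| = d₁(F̂, F)`. The triangle inequality through `G_m` adds `ε`.
All the `d₁` terms are finite because `d₁(μ, ν) ≤ E|Y - Z|` for any coupling `(Y, Z)` of `μ`
and `ν`.
-/

section CDF

variable (μ : Measure ℝ)

lemma cdfFun_eq_cdf [IsProbabilityMeasure μ] : cdfFun μ = cdf μ := by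
  ext x; rw [cdfFun, cdf_eq_real, measureReal_def]

lemma measurable_cdfFun [IsProbabilityMeasure μ] : Measurable (cdfFun μ) := by
  rw [cdfFun_eq_cdf]; exact (cdf μ).mono.measurable

lemma cdfFun_dirac (a x : ℝ) : cdfFun (Measure.dirac a) x = if a ≤ x then 1 else 0 := by
  by_cases h : a ≤ x <;> simp [cdfFun, h]

lemma measurable_cdfFun_apply (x : ℝ) : Measurable fun μ : Measure ℝ => cdfFun μ x :=
  ENNReal.measurable_toReal.comp (Measure.measurable_coe measurableSet_Iic)

lemma pseudoInv_cdfFun_le_iff [IsProbabilityMeasure μ] {t : ℝ} (ht : t ∈ Set.Ioo 0 1) (x : ℝ) :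
    pseudoInv (cdfFun μ) t ≤ x ↔ t ≤ cdfFun μ x := by
  rw [cdfFun_eq_cdf]
  set S := {y | t ≤ cdf μ y}
  have hne : S.Nonempty :=
    ((tendsto_cdf_atTop μ).eventually (eventually_gt_nhds ht.2)).exists.imp fun _ hy => hy.le
  have hbdd : BddBelow S := by
    obtain ⟨y₀, hy₀⟩ := eventually_atBot.mp
      ((tendsto_cdf_atBot μ).eventually (eventually_lt_nhds ht.1))
    exact ⟨y₀, fun y hy => le_of_not_gt fun hlt => (hy₀ y hlt.le).not_ge hy⟩
  have hmem : sInf S ∈ S := by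
    have hcont : ContinuousWithinAt (cdf μ) S (sInf S) :=
      ((cdf μ).right_continuous _).mono fun y hy => csInf_le hbdd hy
    exact isClosed_Ici.closure_subset_iff.mpr (Set.image_subset_iff.mpr fun _ hy => hy)
      (hcont.mem_closure_image (csInf_mem_closure hne hbdd))
  exact ⟨fun h => hmem.trans ((cdf μ).mono h), fun h => csInf_le hbdd h⟩

end CDF

lemma cdfFun_map {Ω : Type*} [MeasurableSpace Ω] (P : Measure Ω) {Y : Ω → ℝ} (hY : Measurable Y)
    (x : ℝ) : cdfFun (P.map Y) x = ∫ ω, (if Y ω ≤ x then 1 else 0) ∂P := by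
  rw [cdfFun, Measure.map_apply hY measurableSet_Iic, ← measureReal_def,
    ← integral_indicator_one (hY measurableSet_Iic)]
  rfl

lemma lintegral_abs_ite_le_sub_ite_le (a b : ℝ) :
    ∫⁻ x, ENNReal.ofReal |(if a ≤ x then (1 : ℝ) else 0) - (if b ≤ x then 1 else 0)| =
      ENNReal.ofReal |a - b| := by
  wlog hab : a ≤ b generalizing a b
  · simpa only [abs_sub_comm] using this b a (le_of_not_ge hab)
  have hpt : ∀ x, ENNReal.ofReal |(if a ≤ x then (1 : ℝ) else 0) - (if b ≤ x then 1 else 0)| =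
      (Set.Ico a b).indicator 1 x := by
    intro x
    by_cases hb : b ≤ x
    · simp [hb, hab.trans hb, hb.not_gt]
    · by_cases ha : a ≤ x <;> simp [ha, hb, lt_of_not_ge hb]
  rw [lintegral_congr hpt, lintegral_indicator_one measurableSet_Ico, Real.volume_Ico,
    abs_sub_comm, abs_of_nonneg (sub_nonneg.mpr hab)]

lemma lintegral_abs_ite_ge_sub_ite_ge (u v : ℝ) :
    ∫⁻ t, ENNReal.ofReal |(if t ≤ u then (1 : ℝ) else 0) - (if t ≤ v then 1 else 0)| =
      ENNReal.ofReal |u - v| := by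
  rw [← lintegral_neg_eq_self]
  simp_rw [neg_le]
  rw [lintegral_abs_ite_le_sub_ite_le, neg_sub_neg, abs_sub_comm]

lemma lintegral_abs_cdfFun_map_sub_le {Ω : Type*} [MeasurableSpace Ω] (P : Measure Ω)
    [IsProbabilityMeasure P] {Y Z : Ω → ℝ} (hY : Measurable Y) (hZ : Measurable Z) :
    ∫⁻ x, ENNReal.ofReal |cdfFun (P.map Y) x - cdfFun (P.map Z) x| ≤
      ∫⁻ ω, ENNReal.ofReal |Y ω - Z ω| ∂P := by
  have hstep : ∀ {W : Ω → ℝ}, Measurable W → Measurable fun p : ℝ × Ω =>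
      if W p.2 ≤ p.1 then (1 : ℝ) else 0 := fun hW =>
    Measurable.ite (measurableSet_le (hW.comp measurable_snd) measurable_fst)
      measurable_const measurable_const
  have hint : ∀ {W : Ω → ℝ}, Measurable W → ∀ x : ℝ,
      Integrable (fun ω => if W ω ≤ x then (1 : ℝ) else 0) P := fun hW x =>
    Integrable.of_bound
      ((hstep hW).comp (measurable_const.prodMk measurable_id)).aestronglyMeasurable 1
      (Eventually.of_forall fun ω => by split_ifs <;> simp)
  calc ∫⁻ x, ENNReal.ofReal |cdfFun (P.map Y) x - cdfFun (P.map Z) x|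
      ≤ ∫⁻ x, ∫⁻ ω, ENNReal.ofReal
          |(if Y ω ≤ x then (1 : ℝ) else 0) - (if Z ω ≤ x then 1 else 0)| ∂P := by
        refine lintegral_mono fun x => ?_
        rw [cdfFun_map P hY, cdfFun_map P hZ, ← integral_sub (hint hY x) (hint hZ x)]
        simpa only [Real.enorm_eq_ofReal_abs] using enorm_integral_le_lintegral_enorm (μ := P)
          fun ω => (if Y ω ≤ x then (1 : ℝ) else 0) - (if Z ω ≤ x then 1 else 0)
    _ = ∫⁻ ω, (∫⁻ x, ENNReal.ofReal
          |(if Y ω ≤ x then (1 : ℝ) else 0) - (if Z ω ≤ x then 1 else 0)|) ∂P :=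
        lintegral_lintegral_swap
          (ENNReal.measurable_ofReal.comp ((hstep hY).sub (hstep hZ)).abs).aemeasurable
    _ = ∫⁻ ω, ENNReal.ofReal |Y ω - Z ω| ∂P :=
        lintegral_congr fun ω => lintegral_abs_ite_le_sub_ite_le _ _

lemma lintegral_abs_cdfFun_sub_le (μ ν : Measure ℝ) [IsProbabilityMeasure μ]
    [IsProbabilityMeasure ν] (hμ : Integrable id μ) (hν : Integrable id ν) :
    ∫⁻ x, ENNReal.ofReal |cdfFun μ x - cdfFun ν x| ≤
      ENNReal.ofReal (∫ y, |y| ∂μ + ∫ y, |y| ∂ν) := by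
  have hcoupling := lintegral_abs_cdfFun_map_sub_le (μ.prod ν) measurable_fst measurable_snd
  rw [Measure.map_fst_prod, Measure.map_snd_prod, measure_univ, measure_univ, one_smul,
    one_smul] at hcoupling
  have hμ₁ : Integrable (fun p : ℝ × ℝ => |p.1|) (μ.prod ν) := hμ.abs.comp_fst ν
  have hν₁ : Integrable (fun p : ℝ × ℝ => |p.2|) (μ.prod ν) := hν.abs.comp_snd μ
  calc ∫⁻ x, ENNReal.ofReal |cdfFun μ x - cdfFun ν x|
      ≤ ∫⁻ p, ENNReal.ofReal (|p.1| + |p.2|) ∂(μ.prod ν) :=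
        hcoupling.trans (lintegral_mono fun p => ENNReal.ofReal_le_ofReal (abs_sub _ _))
    _ = ENNReal.ofReal (∫ p, (|p.1| + |p.2|) ∂(μ.prod ν)) :=
        (ofReal_integral_eq_lintegral_ofReal (hμ₁.add hν₁)
          (ae_of_all _ fun _ => add_nonneg (abs_nonneg _) (abs_nonneg _))).symm
    _ = ENNReal.ofReal (∫ y, |y| ∂μ + ∫ y, |y| ∂ν) := by
        rw [integral_add hμ₁ hν₁, integral_fun_fst, integral_fun_snd]
        simp

lemma integrable_abs_cdfFun_sub {μ ν : Measure ℝ} [IsProbabilityMeasure μ] [IsProbabilityMeasure ν]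
    (hμ : Integrable id μ) (hν : Integrable id ν) :
    Integrable fun x => |cdfFun μ x - cdfFun ν x| :=
  ⟨((measurable_cdfFun μ).sub (measurable_cdfFun ν)).abs.aestronglyMeasurable,
    (hasFiniteIntegral_iff_ofReal (ae_of_all _ fun _ => abs_nonneg _)).mpr
      ((lintegral_abs_cdfFun_sub_le μ ν hμ hν).trans_lt ENNReal.ofReal_lt_top)⟩

lemma integral_abs_cdfFun_sub_le {μ ν : Measure ℝ} [IsProbabilityMeasure μ] [IsProbabilityMeasure ν]
    (hμ : Integrable id μ) (hν : Integrable id ν) :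
    ∫ x, |cdfFun μ x - cdfFun ν x| ≤ ∫ y, |y| ∂μ + ∫ y, |y| ∂ν := by
  rw [← ENNReal.ofReal_le_ofReal_iff (by positivity),
    ofReal_integral_eq_lintegral_ofReal (integrable_abs_cdfFun_sub hμ hν)
      (ae_of_all _ fun _ => abs_nonneg _)]
  exact lintegral_abs_cdfFun_sub_le μ ν hμ hν

lemma integrable_id_dirac (a : ℝ) : Integrable id (Measure.dirac a) :=
  integrable_dirac enorm_lt_top

section EmpiricalCDF

variable {Ω : Type*} {m : ℕ}

lemma empCDF_eq_sum_cdfFun_dirac (m : ℕ) (R : ℕ → Ω → ℝ) (ω : Ω) :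
    empCDF m R ω = fun x =>
      (1 / m : ℝ) * ∑ i ∈ Finset.range m, cdfFun (Measure.dirac (R i ω)) x := by
  funext x
  simp only [empCDF, cdfFun_dirac]

lemma measurable_empCDF (m : ℕ) (R : ℕ → Ω → ℝ) (ω : Ω) : Measurable (empCDF m R ω) := by
  rw [empCDF_eq_sum_cdfFun_dirac]
  exact measurable_const.mul (Finset.measurable_sum _ fun _ _ => measurable_cdfFun _)

lemma measurable_empCDF_uncurry [MeasurableSpace Ω] {R : ℕ → Ω → ℝ}
    (hR : ∀ i, Measurable (R i)) : Measurable fun p : Ω × ℝ => empCDF m R p.1 p.2 :=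
  measurable_const.mul (Finset.measurable_sum _ fun i _ =>
    Measurable.ite (measurableSet_le ((hR i).comp measurable_fst) measurable_snd)
      measurable_const measurable_const)

lemma abs_empCDF_sub_cdfFun_le (hm : m ≠ 0) (R : ℕ → Ω → ℝ) (ω : Ω) (μ : Measure ℝ) (x : ℝ) :
    |empCDF m R ω x - cdfFun μ x| ≤
      (1 / m : ℝ) * ∑ i ∈ Finset.range m, |cdfFun (Measure.dirac (R i ω)) x - cdfFun μ x| := by
  have hsplit : empCDF m R ω x - cdfFun μ x =
      (1 / m : ℝ) * ∑ i ∈ Finset.range m, (cdfFun (Measure.dirac (R i ω)) x - cdfFun μ x) := by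
    rw [empCDF_eq_sum_cdfFun_dirac, Finset.sum_sub_distrib, Finset.sum_const, Finset.card_range,
      nsmul_eq_mul, mul_sub]
    field_simp
  rw [hsplit, abs_mul, abs_of_nonneg (by positivity)]
  gcongr
  exact Finset.abs_sum_le_sum_abs _ _

lemma lintegral_abs_empCDF_sub_empCDF_le (R S : ℕ → Ω → ℝ) (ω : Ω) :
    ∫⁻ x, ENNReal.ofReal |empCDF m R ω x - empCDF m S ω x| ≤
      ENNReal.ofReal (1 / m) * ∑ i ∈ Finset.range m, ENNReal.ofReal |R i ω - S i ω| := by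
  set d : ℕ → ℝ → ℝ := fun i x =>
    cdfFun (Measure.dirac (R i ω)) x - cdfFun (Measure.dirac (S i ω)) x
  have hd : ∀ i, Measurable fun x => ENNReal.ofReal |d i x| := fun i =>
    ENNReal.measurable_ofReal.comp ((measurable_cdfFun _).sub (measurable_cdfFun _)).abs
  have hpt : ∀ x, ENNReal.ofReal |empCDF m R ω x - empCDF m S ω x| ≤
      ENNReal.ofReal (1 / m) * ∑ i ∈ Finset.range m, ENNReal.ofReal |d i x| := by
    intro x
    rw [empCDF_eq_sum_cdfFun_dirac, empCDF_eq_sum_cdfFun_dirac, ← mul_sub,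
      ← Finset.sum_sub_distrib, abs_mul, abs_of_nonneg (by positivity),
      ENNReal.ofReal_mul (by positivity),
      ← ENNReal.ofReal_sum_of_nonneg fun _ _ => abs_nonneg _]
    gcongr
    exact Finset.abs_sum_le_sum_abs _ _
  calc ∫⁻ x, ENNReal.ofReal |empCDF m R ω x - empCDF m S ω x|
      ≤ ∫⁻ x, ENNReal.ofReal (1 / m) * ∑ i ∈ Finset.range m, ENNReal.ofReal |d i x| :=
        lintegral_mono hpt
    _ = ENNReal.ofReal (1 / m) * ∑ i ∈ Finset.range m, ENNReal.ofReal |R i ω - S i ω| := by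
        rw [lintegral_const_mul _ (Finset.measurable_sum _ fun i _ => hd i),
          lintegral_finsetSum _ fun i _ => hd i]
        simp only [d, cdfFun_dirac, lintegral_abs_ite_le_sub_ite_le]

variable (μ : Measure ℝ) [IsProbabilityMeasure μ]

lemma integrable_abs_empCDF_sub_cdfFun (hm : m ≠ 0) (R : ℕ → Ω → ℝ) (ω : Ω)
    (hμ : Integrable id μ) : Integrable fun x => |empCDF m R ω x - cdfFun μ x| := by
  refine Integrable.mono' ((integrable_finsetSum _ fun i _ =>
    integrable_abs_cdfFun_sub (integrable_id_dirac (R i ω)) hμ).const_mul (1 / m : ℝ)) ?_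
    (ae_of_all _ fun x => by simpa using abs_empCDF_sub_cdfFun_le hm R ω μ x)
  exact ((measurable_empCDF m R ω).sub (measurable_cdfFun μ)).abs.aestronglyMeasurable

lemma integral_abs_empCDF_sub_cdfFun_le (hm : m ≠ 0) (R : ℕ → Ω → ℝ) (ω : Ω)
    (hμ : Integrable id μ) :
    ∫ x, |empCDF m R ω x - cdfFun μ x| ≤
      (1 / m : ℝ) * ∑ i ∈ Finset.range m, (|R i ω| + ∫ y, |y| ∂μ) := by
  have hint : ∀ i, Integrable fun x => |cdfFun (Measure.dirac (R i ω)) x - cdfFun μ x| :=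
    fun i => integrable_abs_cdfFun_sub (integrable_id_dirac (R i ω)) hμ
  calc ∫ x, |empCDF m R ω x - cdfFun μ x|
      ≤ ∫ x, (1 / m : ℝ) * ∑ i ∈ Finset.range m,
          |cdfFun (Measure.dirac (R i ω)) x - cdfFun μ x| :=
        integral_mono (integrable_abs_empCDF_sub_cdfFun μ hm R ω hμ)
          ((integrable_finsetSum _ fun i _ => hint i).const_mul _)
          (abs_empCDF_sub_cdfFun_le hm R ω μ)
    _ = (1 / m : ℝ) * ∑ i ∈ Finset.range m,
          ∫ x, |cdfFun (Measure.dirac (R i ω)) x - cdfFun μ x| := by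
        rw [integral_const_mul, integral_finsetSum _ fun i _ => hint i]
    _ ≤ (1 / m : ℝ) * ∑ i ∈ Finset.range m, (|R i ω| + ∫ y, |y| ∂μ) := by
        gcongr with i
        simpa using integral_abs_cdfFun_sub_le (integrable_id_dirac (R i ω)) hμ

end EmpiricalCDF

section DoubleIntegral

variable {α β : Type*} [MeasurableSpace α] [MeasurableSpace β] {μ : Measure α} {ν : Measure β}

lemma ofReal_abs_integral_le (g : α → ℝ) :
    ENNReal.ofReal |∫ a, g a ∂μ| ≤ ∫⁻ a, ENNReal.ofReal |g a| ∂μ := by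
  simpa only [Real.enorm_eq_ofReal_abs] using enorm_integral_le_lintegral_enorm g

lemma ofReal_integral_integral_abs_le (f : α → β → ℝ) :
    ENNReal.ofReal (∫ a, ∫ b, |f a b| ∂ν ∂μ) ≤ ∫⁻ a, ∫⁻ b, ENNReal.ofReal |f a b| ∂ν ∂μ :=
  (ENNReal.ofReal_le_ofReal (le_abs_self _)).trans <| (ofReal_abs_integral_le _).trans <|
    lintegral_mono fun a => by simpa only [abs_abs] using ofReal_abs_integral_le fun b => |f a b|

lemma lintegral_lintegral_ofReal_abs_eq {f : α → β → ℝ}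
    (hint : ∀ a, Integrable (fun b => |f a b|) ν)
    (hint' : Integrable (fun a => ∫ b, |f a b| ∂ν) μ) :
    ∫⁻ a, ∫⁻ b, ENNReal.ofReal |f a b| ∂ν ∂μ = ENNReal.ofReal (∫ a, ∫ b, |f a b| ∂ν ∂μ) := by
  rw [ofReal_integral_eq_lintegral_ofReal hint'
    (ae_of_all _ fun a => integral_nonneg fun b => abs_nonneg _)]
  exact lintegral_congr fun a =>
    (ofReal_integral_eq_lintegral_ofReal (hint a) (ae_of_all _ fun b => abs_nonneg _)).symm

end DoubleIntegral

section EmpiricalCDFExpectation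

variable {Ω : Type*} [MeasurableSpace Ω] {P : Measure Ω} {m : ℕ}

lemma aemeasurable_lintegral_empCDF {R : ℕ → Ω → ℝ} (hR : ∀ i, AEMeasurable (R i) P)
    {f : ℝ × ℝ → ℝ≥0∞} (hf : Measurable f) :
    AEMeasurable (fun ω => ∫⁻ x, f (empCDF m R ω x, x)) P := by
  refine ⟨fun ω => ∫⁻ x, f (empCDF m (fun i => (hR i).mk) ω x, x),
    (hf.comp ((measurable_empCDF_uncurry fun i => (hR i).measurable_mk).prodMk
      measurable_snd)).lintegral_prod_right', ?_⟩
  filter_upwards [ae_all_iff.mpr fun i => (hR i).ae_eq_mk] with ω hω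
  simp only [empCDF, hω]

lemma integrable_integral_abs_empCDF_sub_cdfFun [IsFiniteMeasure P] (hm : m ≠ 0)
    {R : ℕ → Ω → ℝ} (hR : ∀ i, Integrable (R i) P) (μ : Measure ℝ) [IsProbabilityMeasure μ]
    (hμ : Integrable id μ) :
    Integrable (fun ω => ∫ x, |empCDF m R ω x - cdfFun μ x|) P := by
  have hmeas : AEMeasurable (fun ω => ∫⁻ x, ENNReal.ofReal |empCDF m R ω x - cdfFun μ x|) P :=
    aemeasurable_lintegral_empCDF (fun i => (hR i).aemeasurable)
      (ENNReal.measurable_ofReal.comp (measurable_fst.sub ((measurable_cdfFun μ).comp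
        measurable_snd)).abs)
  have hbound : Integrable (fun ω => (1 / m : ℝ) *
      ∑ i ∈ Finset.range m, (|R i ω| + ∫ y, |y| ∂μ)) P :=
    (integrable_finsetSum _ fun i _ => (hR i).abs.add (integrable_const _)).const_mul _
  refine hbound.mono' ?_ (ae_of_all _ fun ω => ?_)
  · refine hmeas.ennreal_toReal.aestronglyMeasurable.congr (ae_of_all _ fun ω => ?_)
    exact (integral_eq_lintegral_of_nonneg_ae (ae_of_all _ fun _ => abs_nonneg _)
      (integrable_abs_empCDF_sub_cdfFun μ hm R ω hμ).aestronglyMeasurable).symm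
  · rw [Real.norm_of_nonneg (integral_nonneg fun _ => abs_nonneg _)]
    simpa using integral_abs_empCDF_sub_cdfFun_le μ hm R ω hμ

lemma lintegral_lintegral_abs_empCDF_sub_cdfFun_eq [IsFiniteMeasure P] (hm : m ≠ 0)
    {R : ℕ → Ω → ℝ} (hR : ∀ i, Integrable (R i) P) (μ : Measure ℝ) [IsProbabilityMeasure μ]
    (hμ : Integrable id μ) :
    ∫⁻ ω, (∫⁻ x, ENNReal.ofReal |empCDF m R ω x - cdfFun μ x|) ∂P =
      ENNReal.ofReal (∫ ω, (∫ x, |empCDF m R ω x - cdfFun μ x|) ∂P) :=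
  lintegral_lintegral_ofReal_abs_eq (fun ω => integrable_abs_empCDF_sub_cdfFun μ hm R ω hμ)
    (integrable_integral_abs_empCDF_sub_cdfFun hm hR μ hμ)

lemma lintegral_lintegral_abs_empCDF_sub_empCDF_le {R S : ℕ → Ω → ℝ}
    (hR : ∀ i, AEMeasurable (R i) P) (hS : ∀ i, AEMeasurable (S i) P) {c : ℝ≥0∞}
    (hc : ∀ i, ∫⁻ ω, ENNReal.ofReal |R i ω - S i ω| ∂P ≤ c) :
    ∫⁻ ω, (∫⁻ x, ENNReal.ofReal |empCDF m R ω x - empCDF m S ω x|) ∂P ≤ c := by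
  calc ∫⁻ ω, (∫⁻ x, ENNReal.ofReal |empCDF m R ω x - empCDF m S ω x|) ∂P
      ≤ ∫⁻ ω, ENNReal.ofReal (1 / m) * ∑ i ∈ Finset.range m, ENNReal.ofReal |R i ω - S i ω| ∂P :=
        lintegral_mono fun ω => lintegral_abs_empCDF_sub_empCDF_le R S ω
    _ = ENNReal.ofReal (1 / m) * ∑ i ∈ Finset.range m, ∫⁻ ω, ENNReal.ofReal |R i ω - S i ω| ∂P := by
        have hRS : ∀ i, AEMeasurable (fun ω => ENNReal.ofReal |R i ω - S i ω|) P := fun i =>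
          ENNReal.measurable_ofReal.comp_aemeasurable ((hR i).sub (hS i)).abs
        rw [lintegral_const_mul' _ _ ENNReal.ofReal_ne_top,
          lintegral_finsetSum' _ fun i _ => hRS i]
    _ ≤ ENNReal.ofReal (1 / m) * ∑ _i ∈ Finset.range m, c := by gcongr with i; exact hc i
    _ ≤ c := by
        rw [Finset.sum_const, Finset.card_range, nsmul_eq_mul, ← mul_assoc,
          ← ENNReal.ofReal_natCast, ← ENNReal.ofReal_mul (by positivity)]
        refine mul_le_of_le_one_left' (ENNReal.ofReal_le_one.mpr ?_)
        rcases Nat.eq_zero_or_pos m with rfl | hm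
        · simp
        · rw [one_div_mul_cancel (by positivity)]

lemma lintegral_lintegral_abs_empCDF_sub_le_add (R : ℕ → Ω → ℝ) {S : ℕ → Ω → ℝ}
    (hS : ∀ i, AEMeasurable (S i) P) {F : ℝ → ℝ} (hF : Measurable F) :
    ∫⁻ ω, (∫⁻ x, ENNReal.ofReal |empCDF m R ω x - F x|) ∂P ≤
      ∫⁻ ω, (∫⁻ x, ENNReal.ofReal |empCDF m R ω x - empCDF m S ω x|) ∂P +
        ∫⁻ ω, (∫⁻ x, ENNReal.ofReal |empCDF m S ω x - F x|) ∂P := by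
  rw [← lintegral_add_right' _ (aemeasurable_lintegral_empCDF hS
    (f := fun p => ENNReal.ofReal |p.1 - F p.2|)
    (ENNReal.measurable_ofReal.comp (measurable_fst.sub (hF.comp measurable_snd)).abs))]
  exact lintegral_mono fun ω => (lintegral_mono fun x =>
    (ENNReal.ofReal_le_ofReal (abs_sub_le _ _ _)).trans ENNReal.ofReal_add_le).trans_eq
      (lintegral_add_right _
        (ENNReal.measurable_ofReal.comp ((measurable_empCDF m S ω).sub hF).abs))

end EmpiricalCDFExpectation

section Quantile

/-- A version of `pseudoInv (cdfFun k) t` that is jointly measurable in `(k, t)`, since the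
infimum runs over the rationals only. -/
noncomputable def measQuantile (k : Measure ℝ) (t : ℝ) : ℝ :=
  (⨅ q : ℚ, if t ≤ cdfFun k q then ((q : ℝ) : EReal) else ⊤).toReal

lemma measurable_measQuantile : Measurable fun p : Measure ℝ × ℝ => measQuantile p.1 p.2 :=
  measurable_ereal_toReal.comp (Measurable.iInf fun q => Measurable.ite
    (measurableSet_le measurable_snd ((measurable_cdfFun_apply q).comp measurable_fst))
    measurable_const measurable_const)

lemma measQuantile_eq_pseudoInv (k : Measure ℝ) [IsProbabilityMeasure k] {t : ℝ}
    (ht : t ∈ Set.Ioo 0 1) : measQuantile k t = pseudoInv (cdfFun k) t := by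
  suffices h : (⨅ q : ℚ, if t ≤ cdfFun k q then ((q : ℝ) : EReal) else ⊤) =
      (pseudoInv (cdfFun k) t : EReal) by
    rw [measQuantile, h, EReal.toReal_coe]
  refine le_antisymm (le_of_forall_gt fun b hb => ?_)
    (le_iInf fun q => ?_)
  · obtain ⟨q, hq, hqb⟩ := EReal.exists_rat_btwn_of_lt hb
    have hle : t ≤ cdfFun k q :=
      (pseudoInv_cdfFun_le_iff k ht _).mp (EReal.coe_le_coe_iff.mp hq.le)
    exact (iInf_le _ q).trans_lt (by rwa [if_pos hle])
  · split_ifs with h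
    · exact EReal.coe_le_coe_iff.mpr ((pseudoInv_cdfFun_le_iff k ht _).mpr h)
    · exact le_top

lemma lintegral_abs_pseudoInv_sub_le (k μ : Measure ℝ) [IsProbabilityMeasure k]
    [IsProbabilityMeasure μ] :
    ∫⁻ t in Set.Ioo 0 1, ENNReal.ofReal |pseudoInv (cdfFun k) t - pseudoInv (cdfFun μ) t| ≤
      ∫⁻ x, ENNReal.ofReal |cdfFun k x - cdfFun μ x| := by
  have hstep : ∀ {ρ : Measure ℝ} [IsProbabilityMeasure ρ], Measurable fun p : ℝ × ℝ =>
      if p.2 ≤ cdfFun ρ p.1 then (1 : ℝ) else 0 := fun {ρ} _ =>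
    Measurable.ite (measurableSet_le measurable_snd ((measurable_cdfFun ρ).comp measurable_fst))
      measurable_const measurable_const
  calc ∫⁻ t in Set.Ioo 0 1, ENNReal.ofReal |pseudoInv (cdfFun k) t - pseudoInv (cdfFun μ) t|
      = ∫⁻ t in Set.Ioo 0 1, ∫⁻ x, ENNReal.ofReal
          |(if t ≤ cdfFun k x then (1 : ℝ) else 0) - (if t ≤ cdfFun μ x then 1 else 0)| := by
        refine setLIntegral_congr_fun measurableSet_Ioo fun t ht => ?_
        simp only [← pseudoInv_cdfFun_le_iff _ ht, lintegral_abs_ite_le_sub_ite_le]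
    _ = ∫⁻ x, ∫⁻ t in Set.Ioo 0 1, ENNReal.ofReal
          |(if t ≤ cdfFun k x then (1 : ℝ) else 0) - (if t ≤ cdfFun μ x then 1 else 0)| :=
        lintegral_lintegral_swap (ENNReal.measurable_ofReal.comp
          (((hstep (ρ := k)).comp measurable_swap).sub
            ((hstep (ρ := μ)).comp measurable_swap)).abs).aemeasurable
    _ ≤ ∫⁻ x, ENNReal.ofReal |cdfFun k x - cdfFun μ x| := by
        gcongr with x
        exact (setLIntegral_le_lintegral _ _).trans_eq (lintegral_abs_ite_ge_sub_ite_ge _ _)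

lemma lintegral_abs_measQuantile_sub_le (k μ : Measure ℝ) [IsProbabilityMeasure k]
    [IsProbabilityMeasure μ] :
    ∫⁻ t in Set.Icc 0 1, ENNReal.ofReal |measQuantile k t - measQuantile μ t| ≤
      ∫⁻ x, ENNReal.ofReal |cdfFun k x - cdfFun μ x| := by
  rw [← Measure.restrict_congr_set Ioo_ae_eq_Icc,
    setLIntegral_congr_fun measurableSet_Ioo fun t ht => by
      rw [measQuantile_eq_pseudoInv k ht, measQuantile_eq_pseudoInv μ ht]]
  exact lintegral_abs_pseudoInv_sub_le k μ

end Quantile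

section Contraction

variable {Ω : Type*} [MeasurableSpace Ω] {P : Measure Ω}

lemma ae_mem_Ioo_of_map_eq {V : Ω → ℝ} (hV : Measurable V)
    (hlaw : P.map V = volume.restrict (Set.Icc 0 1)) : ∀ᵐ ω ∂P, V ω ∈ Set.Ioo 0 1 := by
  have h : ∀ᵐ t ∂(P.map V), t ∈ Set.Ioo (0 : ℝ) 1 := by
    rw [hlaw, ← Measure.restrict_congr_set Ioo_ae_eq_Icc]
    exact ae_restrict_mem measurableSet_Ioo
  exact ae_of_ae_map hV.aemeasurable h

variable [IsProbabilityMeasure P]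

lemma lintegral_mul_eq_of_indepFun {α β γ : Type*} [MeasurableSpace α] [MeasurableSpace β]
    [MeasurableSpace γ] {X : Ω → α} {V : Ω → γ} {K : Ω → β} (hX : Measurable X)
    (hV : Measurable V) (hK : Measurable K) (hXV : IndepFun X V P)
    (hXVK : IndepFun (fun ω => (X ω, V ω)) K P) {g : α → ℝ≥0∞} (hg : Measurable g)
    {Ψ : β × γ → ℝ≥0∞} (hΨ : Measurable Ψ) :
    ∫⁻ ω, g (X ω) * Ψ (K ω, V ω) ∂P =
      (∫⁻ a, g a ∂(P.map X)) * ∫⁻ ω, (∫⁻ t, Ψ (K ω, t) ∂(P.map V)) ∂P := by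
  have hlaw : P.map (fun ω => ((X ω, V ω), K ω)) = ((P.map X).prod (P.map V)).prod (P.map K) := by
    rw [← (indepFun_iff_map_prod_eq_prod_map_map hX.aemeasurable hV.aemeasurable).mp hXV]
    exact (indepFun_iff_map_prod_eq_prod_map_map (hX.prodMk hV).aemeasurable
      hK.aemeasurable).mp hXVK
  have hF : Measurable fun p : (α × γ) × β => g p.1.1 * Ψ (p.2, p.1.2) :=
    (hg.comp (measurable_fst.comp measurable_fst)).mul
      (hΨ.comp (measurable_snd.prodMk (measurable_snd.comp measurable_fst)))
  have hΨswap : Measurable fun p : γ × β => Ψ (p.2, p.1) :=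
    hΨ.comp (measurable_snd.prodMk measurable_fst)
  calc ∫⁻ ω, g (X ω) * Ψ (K ω, V ω) ∂P
      = ∫⁻ p, g p.1.1 * Ψ (p.2, p.1.2) ∂(((P.map X).prod (P.map V)).prod (P.map K)) := by
        rw [← hlaw, lintegral_map hF ((hX.prodMk hV).prodMk hK)]
    _ = ∫⁻ q, g q.1 * ∫⁻ k, Ψ (k, q.2) ∂(P.map K) ∂((P.map X).prod (P.map V)) := by
        rw [lintegral_prod _ hF.aemeasurable]
        exact lintegral_congr fun q => lintegral_const_mul (g q.1) (f := fun k => Ψ (k, q.2))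
          (hΨ.comp (measurable_id.prodMk measurable_const))
    _ = (∫⁻ a, g a ∂(P.map X)) * ∫⁻ t, ∫⁻ k, Ψ (k, t) ∂(P.map K) ∂(P.map V) :=
        lintegral_prod_mul hg.aemeasurable hΨswap.lintegral_prod_right'.aemeasurable
    _ = (∫⁻ a, g a ∂(P.map X)) * ∫⁻ ω, (∫⁻ t, Ψ (K ω, t) ∂(P.map V)) ∂P := by
        rw [lintegral_lintegral_swap hΨswap.aemeasurable,
          lintegral_map hΨ.lintegral_prod_right' hK]

/-- The terms of `∑ r ∈ Finset.range b.2.1, |b.2.2 r|` written as a series over all `r`, which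
removes the random number of summands. -/
noncomputable def branchWeight (r : ℕ) (b : ℝ × ℕ × (ℕ → ℝ)) : ℝ≥0∞ :=
  if r < b.2.1 then ENNReal.ofReal |b.2.2 r| else 0

lemma measurable_branchWeight (r : ℕ) : Measurable (branchWeight r) :=
  Measurable.ite (measurableSet_lt measurable_const (measurable_fst.comp measurable_snd))
    (ENNReal.measurable_ofReal.comp ((measurable_pi_apply r).comp
      (measurable_snd.comp measurable_snd)).abs) measurable_const

lemma tsum_branchWeight (b : ℝ × ℕ × (ℕ → ℝ)) :
    ∑' r, branchWeight r b = ENNReal.ofReal (∑ r ∈ Finset.range b.2.1, |b.2.2 r|) := by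
  rw [tsum_eq_sum (f := fun r => branchWeight r b) (s := Finset.range b.2.1) fun r hr =>
      if_neg (by simpa using hr),
    ENNReal.ofReal_sum_of_nonneg fun _ _ => abs_nonneg _]
  exact Finset.sum_congr rfl fun r hr => if_pos (Finset.mem_range.mp hr)

lemma ofReal_abs_sum_mul_pseudoInv_sub_le (b : ℝ × ℕ × (ℕ → ℝ)) (k μ : Measure ℝ)
    [IsProbabilityMeasure k] [IsProbabilityMeasure μ] {u : ℕ → ℝ}
    (hu : ∀ r, u r ∈ Set.Ioo 0 1) :
    ENNReal.ofReal |∑ r ∈ Finset.range b.2.1,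
        b.2.2 r * (pseudoInv (cdfFun k) (u r) - pseudoInv (cdfFun μ) (u r))| ≤
      ∑' r, branchWeight r b * ENNReal.ofReal |measQuantile k (u r) - measQuantile μ (u r)| := by
  calc _ ≤ ENNReal.ofReal (∑ r ∈ Finset.range b.2.1,
          |b.2.2 r| * |pseudoInv (cdfFun k) (u r) - pseudoInv (cdfFun μ) (u r)|) := by
        gcongr
        exact (Finset.abs_sum_le_sum_abs _ _).trans_eq (by simp only [abs_mul])
    _ = ∑ r ∈ Finset.range b.2.1,
          branchWeight r b * ENNReal.ofReal |measQuantile k (u r) - measQuantile μ (u r)| := by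
        rw [ENNReal.ofReal_sum_of_nonneg fun _ _ => by positivity]
        refine Finset.sum_congr rfl fun r hr => ?_
        rw [branchWeight, if_pos (Finset.mem_range.mp hr), ← ENNReal.ofReal_mul (abs_nonneg _),
          measQuantile_eq_pseudoInv k (hu r), measQuantile_eq_pseudoInv μ (hu r)]
    _ ≤ _ := ENNReal.sum_le_tsum _

lemma lintegral_abs_sum_mul_pseudoInv_sub_le {X : Ω → ℝ × ℕ × (ℕ → ℝ)} {V : ℕ → Ω → ℝ}
    {κ : Ω → Measure ℝ} (hX : Measurable X) (hV : ∀ r, Measurable (V r)) (hκ : Measurable κ)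
    (hVlaw : ∀ r, P.map (V r) = volume.restrict (Set.Icc 0 1))
    (hXV : ∀ r, IndepFun X (V r) P) (hXVκ : ∀ r, IndepFun (fun ω => (X ω, V r ω)) κ P)
    (hκprob : ∀ ω, IsProbabilityMeasure (κ ω)) (μ : Measure ℝ) [IsProbabilityMeasure μ] :
    ∫⁻ ω, ENNReal.ofReal |∑ r ∈ Finset.range (X ω).2.1,
        (X ω).2.2 r * (pseudoInv (cdfFun (κ ω)) (V r ω) - pseudoInv (cdfFun μ) (V r ω))| ∂P ≤
      (∫⁻ b, ENNReal.ofReal (∑ r ∈ Finset.range b.2.1, |b.2.2 r|) ∂(P.map X)) *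
        ∫⁻ ω, (∫⁻ x, ENNReal.ofReal |cdfFun (κ ω) x - cdfFun μ x|) ∂P := by
  set Ψ : Measure ℝ × ℝ → ℝ≥0∞ := fun p =>
    ENNReal.ofReal |measQuantile p.1 p.2 - measQuantile μ p.2|
  have hΨ : Measurable Ψ := ENNReal.measurable_ofReal.comp (measurable_measQuantile.sub
    (measurable_measQuantile.comp (measurable_const.prodMk measurable_snd))).abs
  calc _ ≤ ∫⁻ ω, ∑' r, branchWeight r (X ω) * Ψ (κ ω, V r ω) ∂P := by
        refine lintegral_mono_ae ?_
        filter_upwards [ae_all_iff.mpr fun r => ae_mem_Ioo_of_map_eq (hV r) (hVlaw r)] with ω hω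
        have := hκprob ω
        exact ofReal_abs_sum_mul_pseudoInv_sub_le (X ω) (κ ω) μ hω
    _ = ∑' r, (∫⁻ b, branchWeight r b ∂(P.map X)) *
          ∫⁻ ω, (∫⁻ t in Set.Icc 0 1, Ψ (κ ω, t)) ∂P := by
        rw [lintegral_tsum (f := fun r ω => branchWeight r (X ω) * Ψ (κ ω, V r ω)) fun r =>
          ((measurable_branchWeight r).comp hX).aemeasurable.mul
            (hΨ.comp (hκ.prodMk (hV r))).aemeasurable]
        refine tsum_congr fun r => ?_
        rw [lintegral_mul_eq_of_indepFun hX (hV r) hκ (hXV r) (hXVκ r)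
          (measurable_branchWeight r) hΨ, hVlaw r]
    _ ≤ _ := by
        rw [ENNReal.tsum_mul_right, ← lintegral_tsum fun r =>
          (measurable_branchWeight r).aemeasurable]
        simp only [tsum_branchWeight]
        refine mul_le_mul_right (lintegral_mono fun ω => ?_) _
        have := hκprob ω
        exact lintegral_abs_measQuantile_sub_le (κ ω) μ

lemma lintegral_abs_smoothingTransform_sub_le {B : ℕ → Ω → ℝ × ℕ × (ℕ → ℝ)} {U : ℕ → ℕ → Ω → ℝ}
    (hBmeas : ∀ i, Measurable (B i)) (hUmeas : ∀ i r, Measurable (U i r))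
    (hUlaw : ∀ i r, P.map (U i r) = volume.restrict (Set.Icc 0 1))
    (hindep : iIndepFun (lvlFam B U) P) (i : ℕ) {κ : Ω → Measure ℝ} (hκmeas : Measurable κ)
    (hκprob : ∀ ω, IsProbabilityMeasure (κ ω))
    (hκindep : IndepFun (fun ω => (fun i => B i ω, fun i r => U i r ω)) κ P)
    (hκint : ∀ ω, Integrable id (κ ω)) {ν : Measure (ℝ × ℕ × (ℕ → ℝ))}
    (hBlaw : P.map (B i) = ν) (hνint : Integrable (fun v => ∑ r ∈ Finset.range v.2.1, |v.2.2 r|) ν)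
    (μ : Measure ℝ) [IsProbabilityMeasure μ] (hμ : Integrable id μ)
    (hd1int : Integrable (fun ω => ∫ x, |cdfFun (κ ω) x - cdfFun μ x|) P) :
    ∫⁻ ω, ENNReal.ofReal
      |((∑ r ∈ Finset.range (B i ω).2.1,
          (B i ω).2.2 r * pseudoInv (cdfFun (κ ω)) (U i r ω)) + (B i ω).1) -
        ((∑ r ∈ Finset.range (B i ω).2.1,
          (B i ω).2.2 r * pseudoInv (cdfFun μ) (U i r ω)) + (B i ω).1)| ∂P ≤
      ENNReal.ofReal (∫ v, ∑ r ∈ Finset.range v.2.1, |v.2.2 r| ∂ν) *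
        ENNReal.ofReal (∫ ω, (∫ x, |cdfFun (κ ω) x - cdfFun μ x|) ∂P) := by
  simp only [add_sub_add_right_eq_sub, ← Finset.sum_sub_distrib, ← mul_sub]
  rw [ofReal_integral_eq_lintegral_ofReal hνint
      (ae_of_all _ fun _ => Finset.sum_nonneg fun _ _ => abs_nonneg _), ← hBlaw,
    ← lintegral_lintegral_ofReal_abs_eq (fun ω => have := hκprob ω
      integrable_abs_cdfFun_sub (hκint ω) hμ) hd1int]
  exact lintegral_abs_sum_mul_pseudoInv_sub_le (hBmeas i) (hUmeas i) hκmeas (hUlaw i)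
    (fun r => hindep.indepFun (i := .inl i) (j := .inr (i, r)) Sum.inl_ne_inr)
    (fun r => hκindep.comp (φ := fun p => (p.1 i, p.2 i r)) (by fun_prop) measurable_id)
    hκprob μ

end Contraction

theorem stmt11_general {Ω : Type*} [MeasurableSpace Ω] (P : Measure Ω) [IsProbabilityMeasure P]
    (m : ℕ) (hm : 1 ≤ m)
    (ν : Measure (ℝ × ℕ × (ℕ → ℝ)))
    (hνint : Integrable (fun v => ∑ r ∈ Finset.range v.2.1, |v.2.2 r|) ν)
    (B : ℕ → Ω → ℝ × ℕ × (ℕ → ℝ)) (U : ℕ → ℕ → Ω → ℝ)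
    (hBmeas : ∀ i, Measurable (B i)) (hUmeas : ∀ i r, Measurable (U i r))
    (hBlaw : ∀ i, P.map (B i) = ν)
    (hUlaw : ∀ i r, P.map (U i r) = volume.restrict (Set.Icc (0 : ℝ) 1))
    (hindep : iIndepFun (lvlFam B U) P)
    -- the random distribution function F̂_{j-1,m} (CDF of the random measure κ),
    -- independent of the level-j branching vectors and uniforms
    (κ : Ω → Measure ℝ) (hκmeas : Measurable κ)
    (hκprob : ∀ ω, IsProbabilityMeasure (κ ω))
    (hκint : ∀ ω, Integrable id (κ ω))
    (hκindep : IndepFun (fun ω => (fun i => B i ω, fun i r => U i r ω)) κ P)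
    -- the fixed distribution F_{j-1}
    (μprev : Measure ℝ) [IsProbabilityMeasure μprev] (hμint : Integrable id μprev)
    -- the coupled pools
    (Rhat Rj : ℕ → Ω → ℝ)
    (hRhat : ∀ i ω, Rhat i ω =
      (∑ r ∈ Finset.range (B i ω).2.1,
        (B i ω).2.2 r * pseudoInv (cdfFun (κ ω)) (U i r ω)) + (B i ω).1)
    (hRj : ∀ i ω, Rj i ω =
      (∑ r ∈ Finset.range (B i ω).2.1,
        (B i ω).2.2 r * pseudoInv (cdfFun μprev) (U i r ω)) + (B i ω).1)
    -- the distribution F_j of R^(j)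
    (μj : Measure ℝ) (hμj : μj = P.map (Rj 0))
    (hRjint : ∀ i, Integrable (Rj i) P) (hRhatint : ∀ i, Integrable (Rhat i) P)
    (ρ1 δ ε : ℝ)
    (hρ1 : ρ1 = ∫ v, ∑ r ∈ Finset.range v.2.1, |v.2.2 r| ∂ν)
    (hd1int : Integrable (fun ω => ∫ x, |cdfFun (κ ω) x - cdfFun μprev x|) P)
    (hδ : ∫ ω, (∫ x, |cdfFun (κ ω) x - cdfFun μprev x|) ∂P ≤ δ)
    (hε : ∫ ω, (∫ x, |empCDF m Rj ω x - cdfFun μj x|) ∂P ≤ ε) :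
    ∫ ω, (∫ x, |empCDF m Rhat ω x - cdfFun μj x|) ∂P ≤ ρ1 * δ + ε := by
  have hρ1_nonneg : 0 ≤ ρ1 :=
    hρ1 ▸ integral_nonneg fun _ => Finset.sum_nonneg fun _ _ => abs_nonneg _
  have hδ_nonneg : 0 ≤ δ :=
    (integral_nonneg fun _ => integral_nonneg fun _ => abs_nonneg _).trans hδ
  have hε_nonneg : 0 ≤ ε :=
    (integral_nonneg fun _ => integral_nonneg fun _ => abs_nonneg _).trans hε
  have : IsProbabilityMeasure μj := hμj ▸ Measure.isProbabilityMeasure_map (hRjint 0).aemeasurable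
  have hμjint : Integrable id μj := by
    rw [hμj, integrable_map_measure aestronglyMeasurable_id (hRjint 0).aemeasurable]
    exact hRjint 0
  have hcontraction (i : ℕ) :
      ∫⁻ ω, ENNReal.ofReal |Rhat i ω - Rj i ω| ∂P ≤ ENNReal.ofReal (ρ1 * δ) := by
    simp only [hRhat, hRj]
    refine (lintegral_abs_smoothingTransform_sub_le hBmeas hUmeas hUlaw hindep i hκmeas hκprob
      hκindep hκint (hBlaw i) hνint μprev hμint hd1int).trans ?_
    rw [← hρ1, ← ENNReal.ofReal_mul hρ1_nonneg]
    exact ENNReal.ofReal_le_ofReal (mul_le_mul_of_nonneg_left hδ hρ1_nonneg)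
  rw [← ENNReal.ofReal_le_ofReal_iff (by positivity), ENNReal.ofReal_add (by positivity) hε_nonneg]
  calc ENNReal.ofReal (∫ ω, (∫ x, |empCDF m Rhat ω x - cdfFun μj x|) ∂P)
      ≤ ∫⁻ ω, (∫⁻ x, ENNReal.ofReal |empCDF m Rhat ω x - cdfFun μj x|) ∂P :=
        ofReal_integral_integral_abs_le _
    _ ≤ _ := lintegral_lintegral_abs_empCDF_sub_le_add Rhat (fun i => (hRjint i).aemeasurable)
        (measurable_cdfFun μj)
    _ ≤ ENNReal.ofReal (ρ1 * δ) + ENNReal.ofReal ε := by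
        gcongr
        · exact lintegral_lintegral_abs_empCDF_sub_empCDF_le (fun i => (hRhatint i).aemeasurable)
            (fun i => (hRjint i).aemeasurable) hcontraction
        · rw [lintegral_lintegral_abs_empCDF_sub_cdfFun_eq (Nat.one_le_iff_ne_zero.mp hm) hRjint μj
            hμjint]
          exact ENNReal.ofReal_le_ofReal hε

/-- Induction step of the main theorem: if `E[d₁(F̂_{j-1,m}, F_{j-1})] ≤ δ` and
`E[d₁(G_m, F_j)] ≤ ε` for the empirical distribution `G_m` of `m` i.i.d. copies of
`R^{(j)}` (coupled with the bootstrap pool via common uniforms and branching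
vectors), then `E[d₁(F̂_{j,m}, F_j)] ≤ ρ₁ δ + ε`, where `ρ₁ = E[∑_{r≤N} |C_r|]`. -/
theorem stmt11 {Ω : Type*} [MeasurableSpace Ω] (P : Measure Ω) [IsProbabilityMeasure P]
    (m : ℕ) (hm : 1 ≤ m)
    (ν : Measure (ℝ × ℕ × (ℕ → ℝ))) [IsProbabilityMeasure ν]
    (hνint : Integrable (fun v => ∑ r ∈ Finset.range v.2.1, |v.2.2 r|) ν)
    (B : ℕ → Ω → ℝ × ℕ × (ℕ → ℝ)) (U : ℕ → ℕ → Ω → ℝ)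
    (hBmeas : ∀ i, Measurable (B i)) (hUmeas : ∀ i r, Measurable (U i r))
    (hBlaw : ∀ i, P.map (B i) = ν)
    (hUlaw : ∀ i r, P.map (U i r) = volume.restrict (Set.Icc (0 : ℝ) 1))
    (hindep : iIndepFun (lvlFam B U) P)
    -- the random distribution function F̂_{j-1,m} (CDF of the random measure κ),
    -- independent of the level-j branching vectors and uniforms
    (κ : Ω → Measure ℝ) (hκmeas : Measurable κ)
    (hκprob : ∀ ω, IsProbabilityMeasure (κ ω))
    (hκint : ∀ ω, Integrable id (κ ω))
    (hκindep : IndepFun (fun ω => (fun i => B i ω, fun i r => U i r ω)) κ P)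
    -- the fixed distribution F_{j-1}
    (μprev : Measure ℝ) [IsProbabilityMeasure μprev] (hμint : Integrable id μprev)
    -- the coupled pools
    (Rhat Rj : ℕ → Ω → ℝ)
    (hRhat : ∀ i ω, Rhat i ω =
      (∑ r ∈ Finset.range (B i ω).2.1,
        (B i ω).2.2 r * pseudoInv (cdfFun (κ ω)) (U i r ω)) + (B i ω).1)
    (hRj : ∀ i ω, Rj i ω =
      (∑ r ∈ Finset.range (B i ω).2.1,
        (B i ω).2.2 r * pseudoInv (cdfFun μprev) (U i r ω)) + (B i ω).1)
    -- the distribution F_j of R^(j)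
    (μj : Measure ℝ) (hμj : μj = P.map (Rj 0))
    (hRjint : ∀ i, Integrable (Rj i) P) (hRhatint : ∀ i, Integrable (Rhat i) P)
    (ρ1 δ ε : ℝ)
    (hρ1 : ρ1 = ∫ v, ∑ r ∈ Finset.range v.2.1, |v.2.2 r| ∂ν)
    (hd1int : Integrable (fun ω => ∫ x, |cdfFun (κ ω) x - cdfFun μprev x|) P)
    (hδ : ∫ ω, (∫ x, |cdfFun (κ ω) x - cdfFun μprev x|) ∂P ≤ δ)
    (hε : ∫ ω, (∫ x, |empCDF m Rj ω x - cdfFun μj x|) ∂P ≤ ε) :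
    ∫ ω, (∫ x, |empCDF m Rhat ω x - cdfFun μj x|) ∂P ≤ ρ1 * δ + ε :=
  stmt11_general P m hm ν hνint B U hBmeas hUmeas hBlaw hUlaw hindep κ hκmeas hκprob hκint hκindep
    μprev hμint Rhat Rj hRhat hRj μj hμj hRjint hRhatint ρ1 δ ε hρ1 hd1int hδ hε
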